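/- arXiv:2101.06740 — 3 statements merged into one kernel-verified Lean document; each statement's English description precedes it below -/
import Mathlib

section
/- Let V be a finite-dimensional vector space over a field of characteristic 0 equipped with an increasing filtration W indexed by integers, and let T : V → V be an automorphism preserving W such that T^N is unipotent for some N ≥ 1, such that Gr^W_{-ℓ} V = 0 for ℓ ∉ [i, min(2i, 2n-2)] (for fixed integers i ≥ 0, n ≥ 1), and such that log(T^N) maps W_j into W_{j-2} for all j. Then every Jordan block of T has size at most min(⌈(i+1)/2⌉, n - ⌊(i+1)/2⌋). -/
/-- Weight bounds force a bound on Jordan blocks.  Let `V` be a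
finite-dimensional vector space over a field of characteristic 0 with an
increasing exhaustive filtration `W`, and `T` an automorphism preserving `W`
with `T^N` unipotent.  If the graded pieces `Gr^W_{-ℓ} V` vanish for
`ℓ ∉ [i, min(2i, 2n-2)]` and `log(T^N)` maps `W_j` into `W_{j-2}`, then
`(T^N - id)^m = 0` for `m = min(⌈(i+1)/2⌉, n - ⌊(i+1)/2⌋)`; i.e. every Jordan
block of `T` has size at most `m`. -/
theorem jordan_block_bound_from_weights
    (k : Type*) [Field k] [CharZero k]
    (V : Type*) [AddCommGroup V] [Module k V] [FiniteDimensional k V]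
    (W : ℤ → Submodule k V) (hmono : Monotone W)
    (hbot : ∃ a : ℤ, W a = ⊥) (htop : ∃ b : ℤ, W b = ⊤)
    (T : Module.End k V) (hT : IsUnit T)
    (hTW : ∀ (j : ℤ), ∀ x ∈ W j, T x ∈ W j)
    (N : ℕ) (hN : 1 ≤ N) (hnil : IsNilpotent (T ^ N - 1))
    (i n : ℕ) (hn : 1 ≤ n)
    (hGr : ∀ ℓ : ℤ, ℓ ∉ Set.Icc (i : ℤ) (min (2 * (i : ℤ)) (2 * (n : ℤ) - 2)) →
      W (-ℓ) = W (-ℓ - 1))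
    (L : Module.End k V)
    (hL : L = ∑ j ∈ Finset.Icc 1 (Module.finrank k V),
        (((-1 : k) ^ (j + 1) / (j : k)) • (T ^ N - 1) ^ j))
    (hshift : ∀ (j : ℤ), ∀ x ∈ W j, L x ∈ W (j - 2)) :
    (T ^ N - 1) ^ (min ((i + 2) / 2) (n - (i + 1) / 2)) = 0 := by
  classical
  set E : Module.End k V := T ^ N - 1 with hE
  set d : ℕ := Module.finrank k V with hd
  set m : ℕ := min ((i + 2) / 2) (n - (i + 1) / 2) with hm
  by_cases hd0 : d = 0
  · have : Subsingleton V := by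
      rw [← Module.finrank_zero_iff (R := k)]; exact hd0
    exact Subsingleton.elim _ _
  -- Step 1: filtration is ⊤ at and above -i
  have hup : ∀ e : ℕ, W (-(i : ℤ) + e) = W (-(i : ℤ)) := by
    intro e
    induction e with
    | zero => simp
    | succ e ih =>
      have h := hGr ((i : ℤ) - (e + 1)) (by
        intro hmem
        rw [Set.mem_Icc] at hmem
        have := hmem.1
        omega)
      have e1 : (-(i : ℤ) + ((e : ℕ) + 1 : ℕ)) = -((i : ℤ) - ((e : ℤ) + 1)) := by
        push_cast; ring
      have e2 : -((i : ℤ) - ((e : ℤ) + 1)) - 1 = -(i : ℤ) + (e : ℤ) := by ring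
      rw [e1, h, e2, ih]
  have htopi : W (-(i : ℤ)) = ⊤ := by
    obtain ⟨b, hb⟩ := htop
    rcases le_or_gt b (-(i : ℤ)) with hle | hlt
    · exact top_le_iff.mp (hb ▸ hmono hle)
    · have := hup (b + i).toNat
      have e1 : (-(i : ℤ) + ((b + i).toNat : ℤ)) = b := by omega
      rw [e1, hb] at this
      exact this.symm
  -- Step 2: filtration is ⊥ below -M
  set M : ℤ := min (2 * (i : ℤ)) (2 * (n : ℤ) - 2) with hM
  have hdown : ∀ e : ℕ, W (-M - 1 - e) = W (-M - 1) := by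
    intro e
    induction e with
    | zero => simp
    | succ e ih =>
      have h := hGr (M + 1 + e) (by
        intro hmem
        rw [Set.mem_Icc] at hmem
        have := hmem.2
        omega)
      have e1 : -(M + 1 + (e : ℤ)) = -M - 1 - e := by ring
      have e2 : -M - 1 - (e : ℤ) - 1 = -M - 1 - ((e : ℕ) + 1 : ℕ) := by push_cast; ring
      rw [e1, e2] at h
      rw [← h, ih]
  have hbotM : W (-M - 1) = ⊥ := by
    obtain ⟨a, ha⟩ := hbot
    rcases le_or_gt (-M - 1) a with hle | hlt
    · exact le_bot_iff.mp (ha ▸ hmono hle)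
    · have := hdown (-M - 1 - a).toNat
      have e1 : (-M - 1 - ((-M - 1 - a).toNat : ℤ)) = a := by omega
      rw [e1, ha] at this
      exact this.symm
  -- Step 3: L^e maps everything into W (-i - 2e)
  have hLpow : ∀ e : ℕ, ∀ x : V, (L ^ e) x ∈ W (-(i : ℤ) - 2 * e) := by
    intro e
    induction e with
    | zero =>
      intro x
      simp only [pow_zero, Module.End.one_apply]
      have : (-(i : ℤ) - 2 * ((0 : ℕ) : ℤ)) = -(i : ℤ) := by push_cast; ring
      rw [this, htopi]
      trivial
    | succ e ih =>
      intro x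
      have h1 : (L ^ (e + 1)) x = L ((L ^ e) x) := by
        rw [pow_succ']; rfl
      have h2 := hshift _ _ (ih x)
      have e1 : (-(i : ℤ) - 2 * (e : ℤ) - 2) = -(i : ℤ) - 2 * ((e + 1 : ℕ) : ℤ) := by
        push_cast; ring
      rw [h1]
      rw [e1] at h2
      exact h2
  -- Step 4: L ^ m = 0
  have hLm0 : L ^ m = 0 := by
    ext x
    have h1 := hLpow m x
    have hle : (-(i : ℤ) - 2 * (m : ℤ)) ≤ -M - 1 := by omega
    have h2 : (L ^ m) x ∈ W (-M - 1) := hmono hle h1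
    rw [hbotM] at h2
    simpa using h2
  -- Step 5: algebra, L = E * u with u a unit
  set u : Module.End k V := ∑ j ∈ Finset.Icc 1 d,
      (((-1 : k) ^ (j + 1) / (j : k)) • E ^ (j - 1)) with hu
  have hLu : L = E * u := by
    rw [hL, hu, Finset.mul_sum]
    refine Finset.sum_congr rfl fun j hj => ?_
    rw [Finset.mem_Icc] at hj
    rw [mul_smul_comm, ← pow_succ', Nat.sub_add_cancel hj.1]
  set v : Module.End k V := ∑ j ∈ Finset.Icc 2 d,
      (((-1 : k) ^ (j + 1) / (j : k)) • E ^ (j - 1)) with hv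
  have hsplit : u = 1 + v := by
    have h1 : Finset.Icc 1 d = insert 1 (Finset.Icc 2 d) := by
      ext x; simp only [Finset.mem_Icc, Finset.mem_insert]; omega
    rw [hu, h1, Finset.sum_insert (by simp [Finset.mem_Icc]), hv]
    norm_num
  have hEnil : IsNilpotent E := hnil
  have hvnil : IsNilpotent v := by
    rw [hv]
    apply Commute.isNilpotent_sum
    · intro j hj
      rw [Finset.mem_Icc] at hj
      apply IsNilpotent.smul
      obtain ⟨r, hr⟩ := hEnil
      refine ⟨r, ?_⟩
      rw [← pow_mul]
      have hle : r ≤ (j - 1) * r := Nat.le_mul_of_pos_left r (by omega)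
      have heq : (j - 1) * r = r + ((j - 1) * r - r) := by omega
      rw [heq, pow_add, hr, zero_mul]
    · intro a b _ _
      exact ((Commute.pow_pow_self E _ _).smul_left _).smul_right _
  have huunit : IsUnit u := by
    rw [hsplit]
    exact hvnil.isUnit_one_add
  have hcomm : Commute E u := by
    rw [hu]
    apply Commute.sum_right
    intro j hj
    exact ((Commute.refl E).pow_right _).smul_right _
  have hfin : E ^ m * u ^ m = 0 := by
    rw [← hcomm.mul_pow, ← hLu, hLm0]
  exact ((huunit.pow m).mul_left_eq_zero).mp hfin
end

section
/- Let V be a finite-dimensional ℚ-vector space with a mixed Hodge structure, and let T : V → V be an automorphism such that log(T^N) : V → V(-1) is a morphism of mixed Hodge structures for some N ≥ 1 with T^N unipotent, where V(-1) denotes the Tate twist (weight filtration shifted so that W_j V(-1) = W_{j-2}V). If T is additionally a morphism of mixed Hodge structures V → V, then T^N = id_V. -/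
open TensorProduct

/-- Complex conjugation on the complexification `ℂ ⊗[ℚ] V`. -/
noncomputable def conjC (V : Type) [AddCommGroup V] [Module ℚ V] :
    (ℂ ⊗[ℚ] V) ≃ₗ[ℚ] (ℂ ⊗[ℚ] V) :=
  TensorProduct.congr (Complex.conjAe.toLinearEquiv.restrictScalars ℚ)
    (LinearEquiv.refl ℚ V)

/-- The conjugate of a complex subspace of the complexification. -/
noncomputable def conjSub {V : Type} [AddCommGroup V] [Module ℚ V]
    (p : Submodule ℂ (ℂ ⊗[ℚ] V)) : Submodule ℂ (ℂ ⊗[ℚ] V) :=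
  Submodule.span ℂ (conjC V '' (p : Set (ℂ ⊗[ℚ] V)))

/-- A mixed Hodge structure on a rational vector space `V`: an increasing
(exhaustive, finite) weight filtration `W` on `V` and a decreasing Hodge
filtration `F` on `V ⊗ ℂ` such that `F` and its conjugate induce `n`-opposed
filtrations on each weight-graded piece `Gr^W_n`. -/
structure MixedHodge (V : Type) [AddCommGroup V] [Module ℚ V] where
  W : ℤ → Submodule ℚ V
  F : ℤ → Submodule ℂ (ℂ ⊗[ℚ] V)
  monoW : Monotone W
  antiF : Antitone F
  botW : ∃ a : ℤ, W a = ⊥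
  topW : ∃ b : ℤ, W b = ⊤
  topF : ∃ a : ℤ, F a = ⊤
  botF : ∃ b : ℤ, F b = ⊥
  graded_sup : ∀ n p : ℤ,
    ((W n).baseChange ℂ ⊓ F p) ⊔ ((W n).baseChange ℂ ⊓ conjSub (F (n - p + 1)))
        ⊔ (W (n - 1)).baseChange ℂ = (W n).baseChange ℂ
  graded_inf : ∀ n p : ℤ,
    (((W n).baseChange ℂ ⊓ F p) ⊔ (W (n - 1)).baseChange ℂ) ⊓
        (((W n).baseChange ℂ ⊓ conjSub (F (n - p + 1))) ⊔ (W (n - 1)).baseChange ℂ)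
      ≤ (W (n - 1)).baseChange ℂ

/-- A morphism of mixed Hodge structures: a `ℚ`-linear map compatible with the
weight filtration and (after complexification) the Hodge filtration. -/
def IsMHSHom {V V' : Type} [AddCommGroup V] [Module ℚ V]
    [AddCommGroup V'] [Module ℚ V']
    (HV : MixedHodge V) (HV' : MixedHodge V') (f : V →ₗ[ℚ] V') : Prop :=
  (∀ n : ℤ, (HV.W n).map f ≤ HV'.W n) ∧
  (∀ p : ℤ, (HV.F p).map (f.baseChange ℂ) ≤ HV'.F p)

/-!
`L = log (T ^ N)` is a polynomial in `T`, so it preserves `F`, hence also `conj F`, and it maps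
`W_n` into `W_{n-1}`. Because `F` and `conj F` are `m`-opposed on `Gr^W_m`, a map with these
properties that sends every `W_n` into `W_{n-1-k}` also sends it into `W_{n-2-k}`. As `W` is
finite, `L = 0`; and `L = (T ^ N - 1) * (1 + nilpotent)`, so `T ^ N = 1`.
-/

open Polynomial

section BaseChange

variable {R A M N : Type*} [CommSemiring R] [CommSemiring A] [Algebra R A]
  [AddCommMonoid M] [Module R M] [AddCommMonoid N] [Module R N]

theorem Submodule.mapsTo_baseChange {f : M →ₗ[R] N} {p : Submodule R M} {q : Submodule R N}
    (h : Set.MapsTo f p q) : Set.MapsTo (f.baseChange A) (p.baseChange A) (q.baseChange A) := by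
  rintro _ ⟨x, rfl⟩
  refine ⟨(f.restrict h).baseChange A x, ?_⟩
  rw [← LinearMap.comp_apply, ← LinearMap.baseChange_comp, ← LinearMap.comp_apply,
    ← LinearMap.baseChange_comp]
  rfl

theorem LinearMap.mapsTo_baseChange_aeval {f : Module.End R M} (P : R[X])
    {q : Submodule A (A ⊗[R] M)} (h : Set.MapsTo (f.baseChange A) q q) :
    Set.MapsTo ((aeval f P).baseChange A) q q := by
  change Set.MapsTo (Module.End.baseChangeHom R A M (aeval f P)) q q
  rw [← aeval_algHom_apply]
  exact fun _ hx =>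
    aeval_apply_smul_mem_of_le_comap' (q := q.restrictScalars R) hx P (f.baseChange A) h

end BaseChange

section Conjugation

variable {V V' : Type} [AddCommGroup V] [Module ℚ V] [AddCommGroup V'] [Module ℚ V']

theorem baseChange_conjC (f : V →ₗ[ℚ] V') (x : ℂ ⊗[ℚ] V) :
    f.baseChange ℂ (conjC V x) = conjC V' (f.baseChange ℂ x) := by
  induction x using TensorProduct.induction_on with
  | zero => simp
  | tmul c v => rfl
  | add a b ha hb => simp only [map_add, ha, hb]

theorem conjSub_mono {p q : Submodule ℂ (ℂ ⊗[ℚ] V)} (h : p ≤ q) :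
    conjSub p ≤ conjSub q :=
  Submodule.span_mono (Set.image_mono h)

@[simp]
theorem conjSub_top : conjSub (⊤ : Submodule ℂ (ℂ ⊗[ℚ] V)) = ⊤ := by
  simp [conjSub, (conjC V).surjective.range_eq]

@[simp]
theorem conjSub_bot : conjSub (⊥ : Submodule ℂ (ℂ ⊗[ℚ] V)) = ⊥ := by
  simp [conjSub]

theorem mapsTo_conjSub {f : V →ₗ[ℚ] V'} {p : Submodule ℂ (ℂ ⊗[ℚ] V)}
    {q : Submodule ℂ (ℂ ⊗[ℚ] V')} (h : Set.MapsTo (f.baseChange ℂ) p q) :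
    Set.MapsTo (f.baseChange ℂ) (conjSub p) (conjSub q) := by
  intro x hx
  induction hx using Submodule.span_induction with
  | mem _ hz =>
    obtain ⟨v, hv, rfl⟩ := hz
    rw [baseChange_conjC]
    exact Submodule.subset_span ⟨_, h hv, rfl⟩
  | zero => simp
  | add _ _ _ _ h1 h2 => rw [map_add]; exact add_mem h1 h2
  | smul c _ _ h1 => rw [map_smul]; exact Submodule.smul_mem _ _ h1

end Conjugation

theorem IsNilpotent.eq_zero_of_sum_smul_pow_eq_zero {K R : Type*} [CommSemiring K] [Ring R]
    [Algebra K R] {u : R} (hu : IsNilpotent u) {n : ℕ} (hn : n ≠ 0) {c : ℕ → K}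
    (hc : IsUnit (c 1)) (h : ∑ j ∈ Finset.Icc 1 n, c j • u ^ j = 0) : u = 0 := by
  set v := ∑ j ∈ Finset.Ioc 1 n, c j • u ^ (j - 1)
  have hfactor : ∑ j ∈ Finset.Icc 1 n, c j • u ^ j = u * (c 1 • 1 + v) := by
    rw [Finset.Icc_eq_cons_Ioc (by omega), Finset.sum_cons, mul_add, Finset.mul_sum,
      mul_smul_comm, mul_one, pow_one]
    congr 1
    refine Finset.sum_congr rfl fun j hj => ?_
    rw [mul_smul_comm, ← pow_succ', Nat.sub_add_cancel (Finset.mem_Ioc.mp hj).1.le]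
  have hv : IsNilpotent v := by
    refine Commute.isNilpotent_sum (fun j hj => ?_) fun i j _ _ => ?_
    · exact (hu.pow_of_pos (by grind)).smul _
    · exact (((Commute.refl u).pow_pow _ _).smul_left _).smul_right _
  have hunit : IsUnit (c 1 • (1 : R) + v) := by
    refine hv.isUnit_add_left_of_commute ?_ ?_
    · rw [← Algebra.algebraMap_eq_smul_one]
      exact hc.map _
    · exact (Commute.one_right v).smul_right (c 1)
  exact hunit.mul_left_eq_zero.mp (hfactor ▸ h)

namespace MixedHodge

variable {V : Type} [AddCommGroup V] [Module ℚ V] (H : MixedHodge V)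

theorem mem_W_sub_one_of_forall_mem_sup {m : ℤ} {y : ℂ ⊗[ℚ] V}
    (h : ∀ p : ℤ, y ∈ ((H.W m).baseChange ℂ ⊓ H.F p)
        ⊔ ((H.W m).baseChange ℂ ⊓ conjSub (H.F (m - p + 2)))
        ⊔ (H.W (m - 1)).baseChange ℂ) :
    y ∈ (H.W (m - 1)).baseChange ℂ := by
  set Wm := (H.W m).baseChange ℂ
  set Wm1 := (H.W (m - 1)).baseChange ℂ
  obtain ⟨a, ha⟩ := H.topF
  obtain ⟨b, hb⟩ := H.botF
  have hWm1 : Wm1 ≤ Wm := Submodule.baseChange_mono ℂ (H.monoW (by omega))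
  -- `F^(m-q+1)` and `conj F^q` are opposed on `Gr^W_m`, so the `F`-component in `h` can be
  -- discarded one step at a time.
  have key (q : ℤ) (hq : a ≤ q) : y ∈ (Wm ⊓ conjSub (H.F q)) ⊔ Wm1 := by
    induction q, hq using Int.leInduction with
    | base =>
      rw [ha, conjSub_top, inf_top_eq]
      exact Submodule.mem_sup_left (sup_le (sup_le inf_le_left inf_le_left) hWm1 (h a))
    | succ q _ ih =>
      have hmono : (Wm ⊓ conjSub (H.F (q + 1))) ⊔ Wm1 ≤ (Wm ⊓ conjSub (H.F q)) ⊔ Wm1 :=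
        sup_le_sup_right (inf_le_inf_left _ (conjSub_mono (H.antiF (by omega)))) _
      have hopp : (Wm ⊓ H.F (m - q + 1)) ⊓ ((Wm ⊓ conjSub (H.F q)) ⊔ Wm1) ≤ Wm1 := by
        have := H.graded_inf m (m - q + 1)
        rw [show m - (m - q + 1) + 1 = q by ring] at this
        exact (inf_le_inf_right _ le_sup_left).trans this
      have hy : y ∈ ((Wm ⊓ conjSub (H.F (q + 1))) ⊔ Wm1 ⊔ Wm ⊓ H.F (m - q + 1)) ⊓
          ((Wm ⊓ conjSub (H.F q)) ⊔ Wm1) := by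
        refine ⟨?_, ih⟩
        have := h (m - q + 1)
        rwa [show m - (m - q + 1) + 2 = q + 1 by ring, sup_comm (Wm ⊓ H.F _),
          sup_right_comm] at this
      rw [sup_inf_assoc_of_le _ hmono] at hy
      exact sup_le le_rfl (hopp.trans le_sup_right) hy
  have hbot : H.F (max a b) = ⊥ := le_bot_iff.mp (hb ▸ H.antiF (le_max_right a b))
  simpa [hbot] using key (max a b) (le_max_left a b)

variable {f : Module.End ℚ V}

theorem mapsTo_baseChange_W_sub (hF : ∀ p, Set.MapsTo (f.baseChange ℂ) (H.F p) (H.F p))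
    (hW : ∀ n, Set.MapsTo f (H.W n) (H.W (n - 1))) (k : ℕ) (n : ℤ) :
    Set.MapsTo (f.baseChange ℂ) ((H.W n).baseChange ℂ) ((H.W (n - 1 - k)).baseChange ℂ) := by
  induction k generalizing n with
  | zero => simpa using Submodule.mapsTo_baseChange (hW n)
  | succ k ih =>
    intro x hx
    rw [show n - 1 - ((k + 1 : ℕ) : ℤ) = n - 1 - k - 1 by push_cast; ring]
    refine H.mem_W_sub_one_of_forall_mem_sup fun p => ?_
    rw [← H.graded_sup n p] at hx
    obtain ⟨u, hu, c, hc, rfl⟩ := Submodule.mem_sup.mp hx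
    obtain ⟨a, ⟨haW, haF⟩, b, ⟨hbW, hbF⟩, rfl⟩ := Submodule.mem_sup.mp hu
    have hconj : conjSub (H.F (n - p + 1)) ≤ conjSub (H.F (n - 1 - k - p + 2)) :=
      conjSub_mono (H.antiF (by omega))
    rw [map_add, map_add]
    refine add_mem (add_mem ?_ ?_) ?_
    · exact Submodule.mem_sup_left (Submodule.mem_sup_left ⟨ih n haW, hF p haF⟩)
    · exact Submodule.mem_sup_left
        (Submodule.mem_sup_right ⟨ih n hbW, hconj (mapsTo_conjSub (hF _) hbF)⟩)
    · exact Submodule.mem_sup_right (by simpa [sub_right_comm] using ih (n - 1) hc)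

theorem eq_zero_of_mapsTo_F_of_mapsTo_W_sub_one
    (hF : ∀ p, Set.MapsTo (f.baseChange ℂ) (H.F p) (H.F p))
    (hW : ∀ n, Set.MapsTo f (H.W n) (H.W (n - 1))) : f = 0 := by
  obtain ⟨a, ha⟩ := H.botW
  obtain ⟨b, hb⟩ := H.topW
  refine (Module.FaithfullyFlat.zero_iff_lTensor_zero ℚ ℂ f).mpr (LinearMap.ext fun x => ?_)
  have hx := H.mapsTo_baseChange_W_sub hF hW (b - a).toNat b
    (show x ∈ (H.W b).baseChange ℂ by simp [hb])
  have hle : H.W (b - 1 - (b - a).toNat) ≤ H.W a := H.monoW (by omega)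
  simpa [ha, ← LinearMap.baseChange_eq_ltensor] using Submodule.baseChange_mono ℂ hle hx

end MixedHodge

theorem tate_twist_morphism_forces_finite_order_general
    (V : Type) [AddCommGroup V] [Module ℚ V] [FiniteDimensional ℚ V]
    (H : MixedHodge V)
    (T : Module.End ℚ V)
    (N : ℕ) (hnil : IsNilpotent (T ^ N - 1))
    (L : Module.End ℚ V)
    (hL : L = ∑ j ∈ Finset.Icc 1 (Module.finrank ℚ V),
        (((-1 : ℚ) ^ (j + 1) / (j : ℚ)) • (T ^ N - 1) ^ j))
    (hLW : ∀ j : ℤ, ∀ x ∈ H.W j, L x ∈ H.W (j - 2))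
    (hTF : ∀ p : ℤ, ∀ x ∈ H.F p, T.baseChange ℂ x ∈ H.F p) :
    T ^ N = 1 := by
  rcases eq_or_ne (Module.finrank ℚ V) 0 with hd | hd
  · have := Module.finrank_zero_iff.mp hd
    exact Subsingleton.elim _ _
  have hLpoly : L = aeval T (∑ j ∈ Finset.Icc 1 (Module.finrank ℚ V),
      (((-1 : ℚ) ^ (j + 1) / (j : ℚ)) • (X ^ N - 1 : ℚ[X]) ^ j)) := by
    simp [hL, map_sum]
  have hLF (p : ℤ) : Set.MapsTo (L.baseChange ℂ) (H.F p) (H.F p) :=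
    hLpoly ▸ LinearMap.mapsTo_baseChange_aeval _ (hTF p)
  have hL0 : L = 0 :=
    H.eq_zero_of_mapsTo_F_of_mapsTo_W_sub_one hLF fun j _ hx => H.monoW (by omega) (hLW j _ hx)
  exact sub_eq_zero.mp <| hnil.eq_zero_of_sum_smul_pow_eq_zero hd
    (c := fun j => (-1 : ℚ) ^ (j + 1) / j) (by norm_num) (hL ▸ hL0)

/-- Let `V` carry a mixed Hodge structure and let `T` be an
automorphism of `V` with `T^N` unipotent such that `log(T^N)` is a morphism of
mixed Hodge structures `V → V(-1)` (i.e. it shifts the weight filtration by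
`-2` and the Hodge filtration by `-1`).  If `T` is moreover a morphism of
mixed Hodge structures `V → V`, then `T^N = id`. -/
theorem tate_twist_morphism_forces_finite_order
    (V : Type) [AddCommGroup V] [Module ℚ V] [FiniteDimensional ℚ V]
    (H : MixedHodge V)
    (T : Module.End ℚ V) (hT : IsUnit T)
    (N : ℕ) (hN : 1 ≤ N) (hnil : IsNilpotent (T ^ N - 1))
    (L : Module.End ℚ V)
    (hL : L = ∑ j ∈ Finset.Icc 1 (Module.finrank ℚ V),
        (((-1 : ℚ) ^ (j + 1) / (j : ℚ)) • (T ^ N - 1) ^ j))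
    (hLW : ∀ j : ℤ, ∀ x ∈ H.W j, L x ∈ H.W (j - 2))
    (hLF : ∀ p : ℤ, ∀ x ∈ H.F p, L.baseChange ℂ x ∈ H.F (p - 1))
    (hTW : ∀ j : ℤ, ∀ x ∈ H.W j, T x ∈ H.W j)
    (hTF : ∀ p : ℤ, ∀ x ∈ H.F p, T.baseChange ℂ x ∈ H.F p) :
    T ^ N = 1 :=
  tate_twist_morphism_forces_finite_order_general V H T N hnil L hL hLW hTF
end

section
/- Let f ∈ ℂ[x₁,…,x_n] be a weighted homogeneous polynomial with respect to positive integer weights w₁,…,w_n and degree d > 0, and let U = ℂⁿ \ f⁻¹(0). Then f : U → ℂ* is a locally trivial fibration, with trivializing ℂ*-action given (after passing to the associated Milnor fibration structure) by λ·(x₁,…,x_n) = (λ^{w₁}x₁,…,λ^{w_n}x_n) satisfying f(λ·x) = λ^d f(x). -/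
/-- A weighted homogeneous polynomial `f` with positive weights
`w` and degree `d > 0` induces a locally trivial fibration
`f : U = ℂⁿ \ f⁻¹(0) → ℂ*` (the global Milnor fibration), trivialized using the
`ℂ*`-action `λ·x = (λ^{w₁}x₁, …, λ^{wₙ}xₙ)` with `f(λ·x) = λ^d f(x)`. -/
theorem weighted_homogeneous_milnor_fibration
    (n : ℕ) (f : MvPolynomial (Fin n) ℂ)
    (w : Fin n → ℕ) (hw : ∀ i, 0 < w i) (d : ℕ) (hd : 0 < d)
    (hwh : ∀ (l : ℂ) (x : Fin n → ℂ),
      MvPolynomial.eval (fun i => l ^ w i * x i) f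
        = l ^ d * MvPolynomial.eval x f)
    (F : {x : Fin n → ℂ // MvPolynomial.eval x f ≠ 0} → {z : ℂ // z ≠ 0})
    (hF : ∀ x, (F x : ℂ) = MvPolynomial.eval (x : Fin n → ℂ) f) :
    Continuous F ∧
    ∀ c : {z : ℂ // z ≠ 0}, ∃ V : Set {z : ℂ // z ≠ 0},
      IsOpen V ∧ c ∈ V ∧
      ∃ φ : (F ⁻¹' V) ≃ₜ (F ⁻¹' {c}) × V,
        ∀ y : F ⁻¹' V, ((φ y).2 : {z : ℂ // z ≠ 0}) = F y := by
  -- Continuity of F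
  have hFval : Continuous fun x : {x : Fin n → ℂ // MvPolynomial.eval x f ≠ 0} =>
      ((F x : ℂ)) := by
    have h1 : (fun x : {x : Fin n → ℂ // MvPolynomial.eval x f ≠ 0} => ((F x : ℂ)))
        = fun x : {x : Fin n → ℂ // MvPolynomial.eval x f ≠ 0} =>
            MvPolynomial.eval x.1 f := funext hF
    rw [h1]
    exact (MvPolynomial.continuous_eval f).comp continuous_subtype_val
  have hFcont : Continuous F := by
    rw [continuous_induced_rng]
    exact hFval
  refine ⟨hFcont, ?_⟩
  intro c
  set c₀ : ℂ := (c : ℂ) with hc₀def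
  have hc₀ : c₀ ≠ 0 := c.2
  set V : Set {z : ℂ // z ≠ 0} := {z | (z : ℂ) / c₀ ∈ Complex.slitPlane} with hVdef
  have hVopen : IsOpen V :=
    Complex.isOpen_slitPlane.preimage
      ((continuous_subtype_val (p := fun z : ℂ => z ≠ 0)).div_const c₀)
  have hcV : c ∈ V := by
    show c₀ / c₀ ∈ Complex.slitPlane
    rw [div_self hc₀]
    exact Complex.one_mem_slitPlane
  refine ⟨V, hVopen, hcV, ?_⟩
  -- the root function
  set g : ℂ → ℂ := fun z => Complex.exp (Complex.log (z / c₀) / d) with hgdef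
  have hg_ne : ∀ z, g z ≠ 0 := fun z => Complex.exp_ne_zero _
  have hg_pow : ∀ z : ℂ, z / c₀ ∈ Complex.slitPlane → g z ^ d = z / c₀ := by
    intro z hz
    have hz0 : z / c₀ ≠ 0 := Complex.slitPlane_ne_zero hz
    have hdne : (d : ℂ) ≠ 0 := Nat.cast_ne_zero.mpr hd.ne'
    calc g z ^ d = Complex.exp ((d : ℂ) * (Complex.log (z / c₀) / d)) := by
          rw [Complex.exp_nat_mul]
      _ = Complex.exp (Complex.log (z / c₀)) := by rw [mul_div_cancel₀ _ hdne]
      _ = z / c₀ := Complex.exp_log hz0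
  have hgat : ∀ z : ℂ, z / c₀ ∈ Complex.slitPlane → ContinuousAt g z := by
    intro z hz
    have h1 : ContinuousAt (fun y : ℂ => y / c₀) z := (continuous_id.div_const c₀).continuousAt
    have h2 : ContinuousAt Complex.log (z / c₀) := continuousAt_clog hz
    have h3 : ContinuousAt (fun y : ℂ => Complex.log (y / c₀)) z :=
      ContinuousAt.comp (f := fun y : ℂ => y / c₀) h2 h1
    have h4 : ContinuousAt (fun y : ℂ => Complex.log (y / c₀) / d) z := h3.div_const _
    exact ContinuousAt.comp (f := fun y : ℂ => Complex.log (y / c₀) / d)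
      Complex.continuous_exp.continuousAt h4
  -- scaling computation
  have hscale : ∀ (l : ℂ) (x : {x : Fin n → ℂ // MvPolynomial.eval x f ≠ 0}),
      MvPolynomial.eval (fun i => l ^ w i * (x : Fin n → ℂ) i) f
        = l ^ d * (F x : ℂ) := by
    intro l x; rw [hwh, hF]
  -- forward map evaluation
  have hfwd_ne : ∀ y : {x : Fin n → ℂ // MvPolynomial.eval x f ≠ 0},
      (F y : ℂ) / c₀ ∈ Complex.slitPlane →
      MvPolynomial.eval (fun i => (g (F y : ℂ))⁻¹ ^ w i * (y : Fin n → ℂ) i) f = c₀ := by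
    intro y hy
    have hFy : (F y : ℂ) ≠ 0 := (F y).2
    rw [hscale, inv_pow, hg_pow _ hy]
    field_simp
  -- backward map evaluation
  have hbwd : ∀ (v : ℂ), v / c₀ ∈ Complex.slitPlane →
      ∀ x : {x : Fin n → ℂ // MvPolynomial.eval x f ≠ 0}, (F x : ℂ) = c₀ →
      MvPolynomial.eval (fun i => g v ^ w i * (x : Fin n → ℂ) i) f = v := by
    intro v hv x hx
    rw [hscale, hg_pow _ hv, hx]
    field_simp
  -- the forward map
  let toF : (F ⁻¹' V) → (F ⁻¹' {c}) × V := fun y =>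
    have hne : MvPolynomial.eval
        (fun i => (g (F y.1 : ℂ))⁻¹ ^ w i * (y.1 : Fin n → ℂ) i) f ≠ 0 := by
      rw [hfwd_ne y.1 y.2]; exact hc₀
    (⟨⟨_, hne⟩, by
        show F ⟨_, hne⟩ = c
        exact Subtype.ext (by rw [hF]; exact hfwd_ne y.1 y.2)⟩,
      ⟨F y.1, y.2⟩)
  -- the backward map
  let invF : ((F ⁻¹' {c}) × V) → (F ⁻¹' V) := fun p =>
    have hx : (F p.1.1 : ℂ) = c₀ :=
      congrArg Subtype.val (Set.mem_singleton_iff.mp p.1.2)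
    have hne : MvPolynomial.eval
        (fun i => g ((p.2 : {z : ℂ // z ≠ 0}) : ℂ) ^ w i * (p.1.1 : Fin n → ℂ) i) f ≠ 0 := by
      rw [hbwd _ p.2.2 p.1.1 hx]; exact (p.2.1).2
    ⟨⟨_, hne⟩, by
      show ((F ⟨_, hne⟩ : {z : ℂ // z ≠ 0}) : ℂ) / c₀ ∈ Complex.slitPlane
      rw [hF]
      rw [hbwd _ p.2.2 p.1.1 hx]
      exact p.2.2⟩
  -- value of F on invF
  have hinvF_val : ∀ p : ((F ⁻¹' {c}) × V),
      (F (invF p).1 : ℂ) = ((p.2 : {z : ℂ // z ≠ 0}) : ℂ) := by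
    intro p
    show (F ⟨_, _⟩ : ℂ) = _
    rw [hF]
    exact hbwd _ p.2.2 p.1.1 (congrArg Subtype.val (Set.mem_singleton_iff.mp p.1.2))
  refine ⟨Homeomorph.mk (Equiv.mk toF invF ?_ ?_) ?_ ?_, fun y => rfl⟩
  · -- left inverse
    intro y
    apply Subtype.ext
    apply Subtype.ext
    funext i
    show g (F y.1 : ℂ) ^ w i * ((g (F y.1 : ℂ))⁻¹ ^ w i * (y.1 : Fin n → ℂ) i)
      = (y.1 : Fin n → ℂ) i
    rw [← mul_assoc, ← mul_pow, mul_inv_cancel₀ (hg_ne _), one_pow, one_mul]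
  · -- right inverse
    intro p
    have hval := hinvF_val p
    refine Prod.ext ?_ ?_
    · apply Subtype.ext
      apply Subtype.ext
      funext i
      show (g (F (invF p).1 : ℂ))⁻¹ ^ w i
          * (g ((p.2 : {z : ℂ // z ≠ 0}) : ℂ) ^ w i * ((p.1.1 : _) : Fin n → ℂ) i)
        = ((p.1.1 : _) : Fin n → ℂ) i
      rw [hval, ← mul_assoc, ← mul_pow, inv_mul_cancel₀ (hg_ne _), one_pow, one_mul]
    · apply Subtype.ext
      apply Subtype.ext
      exact hval
  · -- continuity of toF
    have hgc : Continuous fun y : (F ⁻¹' V) => g (F y.1 : ℂ) := by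
      rw [continuous_iff_continuousAt]
      intro y
      exact ContinuousAt.comp (f := fun y : (F ⁻¹' V) => (F y.1 : ℂ))
        (hgat _ y.2) ((hFval.comp continuous_subtype_val).continuousAt)
    refine Continuous.prodMk ?_ ?_
    · refine Continuous.subtype_mk (Continuous.subtype_mk ?_ _) _
      refine continuous_pi fun i => ?_
      exact ((hgc.inv₀ fun y => hg_ne _).pow _).mul
        ((continuous_apply i).comp (continuous_subtype_val.comp continuous_subtype_val))
    · exact Continuous.subtype_mk (hFcont.comp continuous_subtype_val) _
  · -- continuity of invF
    have hgc : Continuous fun p : ((F ⁻¹' {c}) × V) =>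
        g ((p.2 : {z : ℂ // z ≠ 0}) : ℂ) := by
      rw [continuous_iff_continuousAt]
      intro p
      exact ContinuousAt.comp
        (f := fun p : ((F ⁻¹' {c}) × V) => ((p.2 : {z : ℂ // z ≠ 0}) : ℂ))
        (hgat _ p.2.2)
        ((continuous_subtype_val.comp (continuous_subtype_val.comp continuous_snd)).continuousAt)
    refine Continuous.subtype_mk (Continuous.subtype_mk ?_ _) _
    refine continuous_pi fun i => ?_
    exact ((hgc.pow _)).mul
      ((continuous_apply i).comp
        (continuous_subtype_val.comp (continuous_subtype_val.comp continuous_fst)))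
end
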